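/- Let θ₀ ∈ ℝ and let η : [0, 1] → ℝ be continuously differentiable with η' ≥ 0 on [0, 1], η(0) = θ₀, η(1) − θ₀ ∈ 2πℤ, and η(ρ) − θ₀ ∉ 2πℤ for every ρ ∈ (0, 1). Then ∫₀¹ η'(ρ) dρ = 2π. In particular, if γ : [0, 1] → ℝ² is a continuously differentiable curve with γ'(ρ) = ‖γ'(ρ)‖·(cos η(ρ), sin η(ρ)) and ‖γ'(ρ)‖ > 0, so that its curvature is κ(ρ) = η'(ρ)/‖γ'(ρ)‖ ≥ 0, then the total (absolute) curvature ∫₀¹ |κ(ρ)|·‖γ'(ρ)‖ dρ of γ equals 2π. -/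

import Mathlib

open Real

/-- If `η` is `C¹` with `η' ≥ 0` on `[0,1]`, `η 0 = θ₀`,
`η 1 − θ₀ ∈ 2πℤ`, and `η ρ − θ₀ ∉ 2πℤ` on `(0,1)`, then
`∫₀¹ η'(ρ) dρ = 2π`. In particular, for any `C¹` planar curve `γ` with
non-vanishing velocity whose lifted tangent angle is `η` (so its curvature is
`κ = η'/‖γ'‖ ≥ 0`), the total absolute curvature
`∫₀¹ |κ(ρ)|·‖γ'(ρ)‖ dρ` equals `2π`. -/
theorem stmt_19 (θ₀ : ℝ) (η : ℝ → ℝ) (hη : ContDiff ℝ 1 η)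
    (hη' : ∀ ρ ∈ Set.Icc (0:ℝ) 1, 0 ≤ deriv η ρ)
    (h0 : η 0 = θ₀)
    (h1 : ∃ k : ℤ, η 1 - θ₀ = 2 * π * k)
    (hint : ∀ ρ ∈ Set.Ioo (0:ℝ) 1, ¬ ∃ k : ℤ, η ρ - θ₀ = 2 * π * k) :
    (∫ ρ in (0:ℝ)..1, deriv η ρ) = 2 * π ∧
    ∀ γ : ℝ → ℝ × ℝ, ContDiff ℝ 1 γ →
      (∀ ρ ∈ Set.Icc (0:ℝ) 1,
        (deriv γ ρ).1
            = Real.sqrt ((deriv γ ρ).1^2 + (deriv γ ρ).2^2) * Real.cos (η ρ) ∧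
          (deriv γ ρ).2
            = Real.sqrt ((deriv γ ρ).1^2 + (deriv γ ρ).2^2) * Real.sin (η ρ) ∧
          0 < Real.sqrt ((deriv γ ρ).1^2 + (deriv γ ρ).2^2)) →
      (∫ ρ in (0:ℝ)..1,
          |deriv η ρ / Real.sqrt ((deriv γ ρ).1^2 + (deriv γ ρ).2^2)|
            * Real.sqrt ((deriv γ ρ).1^2 + (deriv γ ρ).2^2)) = 2 * π := by
  have hcont : Continuous η := hη.continuous
  have hdiff : ∀ x, DifferentiableAt ℝ η x := fun x =>
    hη.differentiable one_ne_zero x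
  have hderivcont : Continuous (deriv η) := (hη.continuous_deriv le_rfl)
  have hFTC : (∫ ρ in (0:ℝ)..1, deriv η ρ) = η 1 - η 0 := by
    exact intervalIntegral.integral_deriv_eq_sub (fun x _ => hdiff x)
      (hderivcont.intervalIntegrable 0 1)
  -- η is monotone on [0,1]
  have hmono : MonotoneOn η (Set.Icc (0:ℝ) 1) := by
    apply monotoneOn_of_deriv_nonneg (convex_Icc 0 1) hcont.continuousOn
      (fun x _ => (hdiff x).differentiableWithinAt)
    intro x hx
    exact hη' x (Set.mem_Icc_of_Ioo (by simpa using hx))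
  obtain ⟨k, hk⟩ := h1
  -- k = 1
  have hk1 : (k : ℝ) = 1 := by
    have hπ := Real.pi_pos
    by_contra hne
    have h01 : η 0 ≤ η 1 := hmono (by norm_num) (by norm_num) (by norm_num)
    have hknn : 0 ≤ (k : ℝ) := by nlinarith [hk, h0]
    rcases lt_or_gt_of_ne hne with hlt | hgt
    · -- k ≤ 0, so k = 0, η constant
      have hk0 : (k : ℝ) = 0 := by
        have : (k : ℤ) < 1 := by exact_mod_cast hlt
        have : (k : ℤ) = 0 := by
          have : (0:ℤ) ≤ k := by exact_mod_cast hknn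
          omega
        exact_mod_cast this
      have he : η 1 = θ₀ := by rw [hk0] at hk; linarith
      have hmid : η (1/2) = θ₀ := by
        have h1' : η (1/2) ≤ η 1 :=
          hmono (by norm_num) (by norm_num) (by norm_num)
        have h0' : η 0 ≤ η (1/2) :=
          hmono (by norm_num) (by norm_num) (by norm_num)
        rw [h0, he] at *
        linarith
      exact hint (1/2) (by norm_num) ⟨0, by rw [hmid]; push_cast; ring⟩
    · -- k ≥ 2, IVT gives interior point hitting θ₀ + 2π
      have hk2 : (2:ℝ) ≤ (k:ℝ) := by
        have : (1:ℤ) < k := by exact_mod_cast hgt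
        exact_mod_cast this
      have hbet : η 0 < θ₀ + 2*π ∧ θ₀ + 2*π < η 1 := by
        constructor
        · rw [h0]; linarith
        · nlinarith [hk]
      obtain ⟨c, hc, hcv⟩ := intermediate_value_Ioo (by norm_num : (0:ℝ) ≤ 1)
        hcont.continuousOn (Set.mem_Ioo.mpr hbet)
      exact hint c hc ⟨1, by rw [hcv]; push_cast; ring⟩
  have hval : η 1 - θ₀ = 2 * π := by rw [hk, hk1]; ring
  have hmain : (∫ ρ in (0:ℝ)..1, deriv η ρ) = 2 * π := by
    rw [hFTC, h0]; exact hval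
  refine ⟨hmain, ?_⟩
  intro γ _ hγ
  rw [← hmain]
  apply intervalIntegral.integral_congr
  intro ρ hρ
  rw [Set.uIcc_of_le (by norm_num : (0:ℝ) ≤ 1)] at hρ
  obtain ⟨_, _, hs⟩ := hγ ρ hρ
  have hd := hη' ρ hρ
  show _ * _ = _
  rw [abs_of_nonneg (div_nonneg hd hs.le), div_mul_cancel₀ _ hs.ne']
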